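/- If i is left admissible for f, maximal for f (ν_i(f) is the nonzero maximum of all evaluations), and f ≠ (1), then i is maximal for ∂f and ν_i(∂f) = ν_i(f) − 1. -/

import Mathlib

open scoped Classical

noncomputable section

/-- `f` is a frequency sequence: `f 0 = 0` and finite support. -/
def IsFreq (f : ℕ → ℕ) : Prop := f 0 = 0 ∧ (Function.support f).Finite

/-- size `|f| = ∑ i·f i`. -/
def fsize (f : ℕ → ℕ) : ℕ := ∑ᶠ n, n * f n

/-- length `ℓ(f) = ∑ f i`. -/
def flen (f : ℕ → ℕ) : ℕ := ∑ᶠ n, f n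

/-- the support `S(f)`. -/
def suppF (f : ℕ → ℕ) : Set ℕ := {i | 1 ≤ i ∧ f i ≠ 0}

/-- `[i,j]` is a spread of `f`: a maximal interval contained in the support. -/
def IsSpread (f : ℕ → ℕ) (i j : ℕ) : Prop :=
  1 ≤ i ∧ i ≤ j ∧ (∀ k, i ≤ k → k ≤ j → f k ≠ 0) ∧ (i = 1 ∨ f (i - 1) = 0) ∧ f (j + 1) = 0

/-- `L(f)`: every other element of each spread, starting from the left end. -/
def Lset (f : ℕ → ℕ) : Set ℕ :=
  {q | ∃ i j, IsSpread f i j ∧ i ≤ q ∧ q ≤ j ∧ (q - i) % 2 = 0}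

/-- `R(f)`: every other element of each spread, starting from the right end. -/
def Rset (f : ℕ → ℕ) : Set ℕ :=
  {q | ∃ i j, IsSpread f i j ∧ i ≤ q ∧ q ≤ j ∧ (j - q) % 2 = 0}

/-- the 2-measure, as the cardinality of `R(f)`. -/
def mu2 (f : ℕ → ℕ) : ℕ := (Rset f).ncard

/-- The Burge demotion operator `∂`. -/
def dB (f : ℕ → ℕ) : ℕ → ℕ := fun n =>
  if n = 0 then 0
  else f n - (if n ∈ Rset f then 1 else 0) + (if n + 1 ∈ Rset f then 1 else 0)

/-- The promotion operator `α`. -/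
def aB (f : ℕ → ℕ) : ℕ → ℕ := fun n =>
  if n = 0 then 0
  else f n - (if n ∈ Lset f then 1 else 0) + (if n - 1 ∈ Lset f then 1 else 0)

/-- the shift `(f₂, f₃, …)`; on partitions this is `P ↦ P - 1`. -/
def tailF (f : ℕ → ℕ) : ℕ → ℕ := fun n => if n = 0 then 0 else f (n + 1)

/-- The operator `β`: `β(f) = (f₁ + 1, α(f₂, f₃, …))`. -/
def bB (f : ℕ → ℕ) : ℕ → ℕ := fun n =>
  if n = 0 then 0 else if n = 1 then f 1 + 1 else aB (tailF f) (n - 1)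

/-- the zero sequence (empty partition). -/
def zeroF : ℕ → ℕ := fun _ => 0

/-- `k` minimal with `∂^[k] f = 0`. -/
def chainK (f : ℕ → ℕ) : ℕ :=
  if h : ∃ m, dB^[m] f = zeroF then Nat.find h else 0

/-- The Burge code of `f`, as a list of letters; `false` = `a`, `true` = `b`.
The `i`-th letter (0-indexed `i`) records whether `∂^[i] f ∈ B`, i.e. `1 ∈ R(∂^[i] f)`. -/
def burgeCode (f : ℕ → ℕ) : List Bool :=
  (List.range (chainK f + 1)).map fun i => if 1 ∈ Rset (dB^[i] f) then true else false

/-- descent set of a word: 1-indexed positions `i` with `ωᵢ = b`, `ω_{i+1} = a`. -/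
def descSet (w : List Bool) : Set ℕ :=
  {i | 1 ≤ i ∧ w[i - 1]? = some true ∧ w[i]? = some false}

/-- the descent set of (the Burge code of) a partition. -/
def DesSet (f : ℕ → ℕ) : Set ℕ := descSet (burgeCode f)

/-- `Des(P)` regarded as a partition, via its frequency sequence. -/
def desFreq (f : ℕ → ℕ) : ℕ → ℕ := fun i => if i ∈ DesSet f then 1 else 0

/-- the 2-measure as the maximal size of a subset of the support without
consecutive pairs. -/
def twoMeasure (f : ℕ → ℕ) : ℕ :=
  sSup {n | ∃ T : Finset ℕ, (↑T : Set ℕ) ⊆ suppF f ∧ (∀ x ∈ T, x + 1 ∉ T) ∧ T.card = n}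

/-- evaluation at `i`: `ν_i(f) = i f_i + (i+1) f_{i+1} + 2 ∑_{j>i+1} f_j`, with `ν₀ = ν₁`. -/
def nuI (f : ℕ → ℕ) (i : ℕ) : ℕ :=
  (max i 1) * f (max i 1) + (max i 1 + 1) * f (max i 1 + 1)
    + 2 * ∑ᶠ j ∈ {j : ℕ | max i 1 + 1 < j}, f j

/-- annihilation at `i`: `ρ_i(f) = (f₁, …, f_{i-1}, f_{i+2}, f_{i+3}, …)`, with `ρ₀ = ρ₁`. -/
def rhoI (f : ℕ → ℕ) (i : ℕ) : ℕ → ℕ := fun n =>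
  if n = 0 then 0 else if n < max i 1 then f n else f (n + 2)

/-- `i ≥ 1` is right admissible in `f`. -/
def RightAdm (f : ℕ → ℕ) (i : ℕ) : Prop :=
  1 ≤ i ∧ 0 < f i ∧ (0 < f (i + 1) ∨ (f (i - 1) = 0 ∧ f (i + 1) = 0))

/-- `i ≥ 0` is left admissible in `f`. -/
def LeftAdm (f : ℕ → ℕ) (i : ℕ) : Prop :=
  0 < f (i + 1) ∧ (0 < f i ∨ (f i = 0 ∧ f (i + 2) = 0))

/-- `i` is a maximal index for `f`: `ν_i(f)` is nonzero and maximal. -/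
def MaxIdx (f : ℕ → ℕ) (i : ℕ) : Prop :=
  nuI f i ≠ 0 ∧ ∀ j, nuI f j ≤ nuI f i

end

/-- the sequence `(1)`, i.e. the partition with a single part 1. -/
def oneF : ℕ → ℕ := fun n => if n = 1 then 1 else 0

/-! The operator `∂` moves one part from each `q ∈ R(f)` down to `q - 1`, and `R(f)` contains
no two consecutive integers while meeting `{q, q + 1}` whenever `f q ≠ 0`. Left admissibility
of `i` therefore makes `ν_i` drop by exactly one. At any other `j`, `ν_j` drops as well unless
`j, j + 1 ∉ R(f)`; then `f j = 0`, and `ν_{j+1} + j f_j = ν_j + j f_{j+2}` shows that `ν_j` is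
either zero or strictly below some `ν_b`, hence below `ν_i`. The hypothesis `f ≠ (1)` gives
`ν_i(f) ≥ 2`, so `ν_i(∂f)` stays nonzero. -/

section Spreads

variable {f : ℕ → ℕ}

lemma IsFreq.exists_forall_ge_eq_zero (hf : IsFreq f) : ∃ N, ∀ k, N ≤ k → f k = 0 := by
  obtain ⟨N, hN⟩ := hf.2.bddAbove
  exact ⟨N + 1, fun k hk => by_contra fun h => absurd (hN h) (by omega)⟩

lemma exists_left_end_of_ne_zero (h0 : f 0 = 0) :
    ∀ q, f q ≠ 0 → ∃ a, 1 ≤ a ∧ a ≤ q ∧ (a = 1 ∨ f (a - 1) = 0) ∧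
      ∀ k, a ≤ k → k ≤ q → f k ≠ 0
  | 0, hq => absurd h0 hq
  | q + 1, hq => by
    by_cases hfq : f q = 0
    · exact ⟨q + 1, by omega, le_rfl, Or.inr hfq, fun k h1 h2 => by rwa [le_antisymm h2 h1]⟩
    obtain ⟨a, ha1, haq, hend, hcov⟩ := exists_left_end_of_ne_zero h0 q hfq
    refine ⟨a, ha1, by omega, hend, fun k h1 h2 => ?_⟩
    rcases Nat.lt_or_ge k (q + 1) with hk | hk
    · exact hcov k h1 (by omega)
    · rwa [le_antisymm h2 hk]

lemma exists_right_end_of_ne_zero {N : ℕ} (hN : ∀ k, N ≤ k → f k = 0) :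
    ∀ n q, N ≤ q + n → f q ≠ 0 → ∃ b, q ≤ b ∧ f (b + 1) = 0 ∧
      ∀ k, q ≤ k → k ≤ b → f k ≠ 0
  | 0, q, hq, hfq => absurd (hN q (by omega)) hfq
  | n + 1, q, hq, hfq => by
    by_cases hfq1 : f (q + 1) = 0
    · exact ⟨q, le_rfl, hfq1, fun k h1 h2 => by rwa [le_antisymm h2 h1]⟩
    obtain ⟨b, hqb, hend, hcov⟩ := exists_right_end_of_ne_zero hN n (q + 1) (by omega) hfq1
    refine ⟨b, by omega, hend, fun k h1 h2 => ?_⟩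
    rcases Nat.lt_or_ge q k with hk | hk
    · exact hcov k hk h2
    · rwa [le_antisymm hk h1]

lemma IsFreq.exists_isSpread (hf : IsFreq f) {q : ℕ} (hq : f q ≠ 0) :
    ∃ a b, IsSpread f a b ∧ a ≤ q ∧ q ≤ b := by
  obtain ⟨N, hN⟩ := hf.exists_forall_ge_eq_zero
  obtain ⟨a, ha1, haq, hleft, hcovl⟩ := exists_left_end_of_ne_zero hf.1 q hq
  obtain ⟨b, hqb, hright, hcovr⟩ := exists_right_end_of_ne_zero hN N q (by omega) hq
  refine ⟨a, b, ⟨ha1, by omega, fun k h1 h2 => ?_, hleft, hright⟩, haq, hqb⟩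
  rcases le_total k q with hk | hk
  · exact hcovl k h1 hk
  · exact hcovr k hk h2

lemma IsSpread.le_right {a b a' b' q : ℕ} (hs : IsSpread f a b) (hs' : IsSpread f a' b')
    (hq : a ≤ q ∧ q ≤ b) (hq' : a' ≤ q ∧ q ≤ b') : b ≤ b' :=
  le_of_not_gt fun h => hs.2.2.1 (b' + 1) (by omega) (by omega) hs'.2.2.2.2

lemma IsSpread.unique_right {a b a' b' q : ℕ} (hs : IsSpread f a b) (hs' : IsSpread f a' b')
    (hq : a ≤ q ∧ q ≤ b) (hq' : a' ≤ q ∧ q ≤ b') : b = b' :=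
  le_antisymm (hs.le_right hs' hq hq') (hs'.le_right hs hq' hq)

lemma IsSpread.mem_Rset_iff {a b q : ℕ} (hs : IsSpread f a b) (hq : a ≤ q ∧ q ≤ b) :
    q ∈ Rset f ↔ (b - q) % 2 = 0 := by
  constructor
  · rintro ⟨a', b', hs', h1, h2, hpar⟩
    rwa [hs.unique_right hs' hq ⟨h1, h2⟩]
  · exact fun hpar => ⟨a, b, hs, hq.1, hq.2, hpar⟩

lemma ne_zero_of_mem_Rset {q : ℕ} (hq : q ∈ Rset f) : f q ≠ 0 := by
  obtain ⟨a, b, hs, h1, h2, -⟩ := hq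
  exact hs.2.2.1 q h1 h2

lemma IsSpread.succ_le_right {a b q : ℕ} (hs : IsSpread f a b) (hq : q ≤ b)
    (hq1 : f (q + 1) ≠ 0) : q + 1 ≤ b :=
  Nat.lt_of_le_of_ne hq fun h => hq1 (h ▸ hs.2.2.2.2)

lemma succ_notMem_Rset {q : ℕ} (hq : q ∈ Rset f) : q + 1 ∉ Rset f := by
  intro hq1
  obtain ⟨a, b, hs, h1, h2, hpar⟩ := hq
  have hb := hs.succ_le_right h2 (ne_zero_of_mem_Rset hq1)
  have := (hs.mem_Rset_iff ⟨by omega, hb⟩).1 hq1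
  omega

lemma add_two_mem_Rset {q : ℕ} (hq : q ∈ Rset f) (hq1 : f (q + 1) ≠ 0) : q + 2 ∈ Rset f := by
  obtain ⟨a, b, hs, h1, h2, hpar⟩ := hq
  have hb := hs.succ_le_right h2 hq1
  exact ⟨a, b, hs, by omega, by omega, by omega⟩

lemma IsFreq.mem_Rset_or_succ_mem (hf : IsFreq f) {q : ℕ} (hq : f q ≠ 0) :
    q ∈ Rset f ∨ q + 1 ∈ Rset f := by
  obtain ⟨a, b, hs, h1, h2⟩ := hf.exists_isSpread hq
  rcases Nat.lt_or_ge q b with hb | hb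
  · rw [hs.mem_Rset_iff ⟨h1, h2⟩, hs.mem_Rset_iff ⟨by omega, hb⟩]
    omega
  · exact Or.inl ((hs.mem_Rset_iff ⟨h1, h2⟩).2 (by omega))

lemma IsFreq.mem_Rset_of_succ_eq_zero (hf : IsFreq f) {q : ℕ} (hq : f q ≠ 0)
    (hq1 : f (q + 1) = 0) : q ∈ Rset f :=
  (hf.mem_Rset_or_succ_mem hq).resolve_right fun h => ne_zero_of_mem_Rset h hq1

end Spreads

section Evaluation

variable {f : ℕ → ℕ}

lemma finsum_mem_gt_eq_sum_Ico {M : Type*} [AddCommMonoid M] {g : ℕ → M} {c N : ℕ}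
    (hN : ∀ k, N ≤ k → g k = 0) :
    ∑ᶠ k ∈ {k : ℕ | c < k}, g k = ∑ k ∈ Finset.Ico (c + 1) N, g k := by
  apply finsum_mem_eq_sum_of_inter_support_eq
  ext k
  simp only [Set.mem_inter_iff, Set.mem_ofPred_eq, Function.mem_support, Finset.coe_Ico,
    Set.mem_Ico]
  exact ⟨fun ⟨h1, h2⟩ => ⟨⟨h1, by_contra fun h => h2 (hN k (by omega))⟩, h2⟩,
    fun ⟨⟨h1, _⟩, h2⟩ => ⟨h1, h2⟩⟩

lemma nuI_eq_sum_Ico {j N : ℕ} (hj : 1 ≤ j) (hN : ∀ k, N ≤ k → f k = 0) :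
    nuI f j = j * f j + (j + 1) * f (j + 1) + 2 * ∑ k ∈ Finset.Ico (j + 2) N, f k := by
  rw [nuI, max_eq_left hj, finsum_mem_gt_eq_sum_Ico hN]

lemma nuI_max_one (j : ℕ) : nuI f (max j 1) = nuI f j := by
  rw [nuI, nuI, max_eq_left (le_max_right j 1)]

lemma IsFreq.nuI_succ_add (hf : IsFreq f) {a : ℕ} (ha : 1 ≤ a) :
    nuI f (a + 1) + a * f a = nuI f a + a * f (a + 2) := by
  obtain ⟨N, hN⟩ := hf.exists_forall_ge_eq_zero
  have hN' : ∀ k, max N (a + 3) ≤ k → f k = 0 := fun k hk => hN k (le_of_max_le_left hk)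
  rw [nuI_eq_sum_Ico (by omega) hN', nuI_eq_sum_Ico ha hN',
    Finset.sum_eq_sum_Ico_succ_bot (show a + 2 < max N (a + 3) by omega)]
  ring

lemma IsFreq.exists_nuI_lt (hf : IsFreq f) {a : ℕ} (ha : 1 ≤ a) (hfa : f a = 0)
    (hfa1 : f (a + 1) = 0) (hν : nuI f a ≠ 0) : ∃ b, nuI f a < nuI f b := by
  obtain ⟨N, hN⟩ := hf.exists_forall_ge_eq_zero
  replace hN : ∀ k, a + N ≤ k → f k = 0 := fun k hk => hN k (by omega)
  induction N generalizing a with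
  | zero =>
    refine absurd ?_ hν
    rw [nuI_eq_sum_Ico ha hN, Finset.Ico_eq_empty (by omega), hN a le_rfl, hN (a + 1) (by omega)]
    simp
  | succ n ih =>
    have hstep := hf.nuI_succ_add ha
    rw [hfa, mul_zero, add_zero] at hstep
    by_cases hfa2 : f (a + 2) = 0
    · rw [hfa2, mul_zero, add_zero] at hstep
      exact hstep ▸ ih (by omega) hfa1 hfa2 (hstep ▸ hν) fun k hk => hN k (by omega)
    · exact ⟨a + 1, by rw [hstep]; have := Nat.mul_pos ha (Nat.pos_of_ne_zero hfa2); omega⟩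

lemma IsFreq.two_le_nuI (hf : IsFreq f) {i : ℕ} (hL : LeftAdm f i) (hne : f ≠ oneF) :
    2 ≤ nuI f i := by
  obtain ⟨N, hN⟩ := hf.exists_forall_ge_eq_zero
  have hN' : ∀ k, max N 3 ≤ k → f k = 0 := fun k hk => hN k (le_of_max_le_left hk)
  rcases Nat.eq_zero_or_pos i with rfl | hi
  · have hf2 : f 2 = 0 := hL.2.resolve_left (by rw [hf.1]; omega) |>.2
    rw [← nuI_max_one, show max 0 1 = 1 from rfl, nuI_eq_sum_Ico le_rfl hN', hf2]
    by_contra hlt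
    simp only [Nat.reduceAdd] at hlt
    refine hne (funext fun k => ?_)
    have hf1 : f 1 = 1 := by have := hL.1; simp only [zero_add] at this; omega
    have htail : ∑ k ∈ Finset.Ico 3 (max N 3), f k = 0 := by omega
    rcases Nat.lt_or_ge k 3 with hk | hk
    · interval_cases k <;> simp [oneF, hf.1, hf1, hf2]
    rcases Nat.lt_or_ge k (max N 3) with hkN | hkN
    · rw [Finset.sum_eq_zero_iff.1 htail k (Finset.mem_Ico.2 ⟨hk, hkN⟩), oneF, if_neg (by omega)]
    · rw [hN' k hkN, oneF, if_neg (by omega)]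
  · rw [nuI_eq_sum_Ico hi hN']
    have := Nat.mul_le_mul_left (i + 1) hL.1
    omega

end Evaluation

section Demotion

variable {f : ℕ → ℕ}

lemma dB_add_ite {k : ℕ} (hk : k ≠ 0) :
    dB f k + (if k ∈ Rset f then 1 else 0) = f k + (if k + 1 ∈ Rset f then 1 else 0) := by
  by_cases h : k ∈ Rset f
  · have := ne_zero_of_mem_Rset h
    by_cases h1 : k + 1 ∈ Rset f <;> simp [dB, hk, h, h1] <;> omega
  · by_cases h1 : k + 1 ∈ Rset f <;> simp [dB, hk, h, h1]

lemma dB_eq_zero_of_forall_ge {N : ℕ} (hN : ∀ k, N ≤ k → f k = 0) {k : ℕ} (hk : N ≤ k) :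
    dB f k = 0 := by
  have h : k ∉ Rset f := fun h => ne_zero_of_mem_Rset h (hN k hk)
  have h1 : k + 1 ∉ Rset f := fun h => ne_zero_of_mem_Rset h (hN (k + 1) (by omega))
  simp [dB, h, h1, hN k hk]

lemma sum_Ico_dB_add_ite {m N : ℕ} (hm : 1 ≤ m) (hmN : m ≤ N) :
    ∑ k ∈ Finset.Ico m N, dB f k + (if m ∈ Rset f then 1 else 0)
      = ∑ k ∈ Finset.Ico m N, f k + (if N ∈ Rset f then 1 else 0) := by
  induction N, hmN using Nat.le_induction with
  | base => simp
  | succ n hn ih =>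
    rw [Finset.sum_Ico_succ_top hn, Finset.sum_Ico_succ_top hn]
    have := dB_add_ite (f := f) (k := n) (by omega)
    omega

/-- Each part `q ∈ R(f)` becomes `q - 1` in `∂f`; the weights of `ν_j` change only for
`q = j, j + 1, j + 2`, by `-j`, `-1` and `j - 1` respectively. -/
lemma IsFreq.nuI_dB_add (hf : IsFreq f) {j : ℕ} (hj : 1 ≤ j) :
    nuI (dB f) j + (j * (if j ∈ Rset f then 1 else 0)
      + (j + 1) * (if j + 1 ∈ Rset f then 1 else 0) + 2 * (if j + 2 ∈ Rset f then 1 else 0))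
    = nuI f j + (j * (if j + 1 ∈ Rset f then 1 else 0)
      + (j + 1) * (if j + 2 ∈ Rset f then 1 else 0)) := by
  obtain ⟨N₀, hN₀⟩ := hf.exists_forall_ge_eq_zero
  set N := max N₀ (j + 3)
  have hN : ∀ k, N ≤ k → f k = 0 := fun k hk => hN₀ k (le_of_max_le_left hk)
  have hRN : N ∉ Rset f := fun h => ne_zero_of_mem_Rset h (hN N le_rfl)
  have hj0 := dB_add_ite (f := f) (k := j) (by omega)
  have hj1 := dB_add_ite (f := f) (k := j + 1) (by omega)
  rw [show j + 1 + 1 = j + 2 from rfl] at hj1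
  have htail := sum_Ico_dB_add_ite (f := f) (m := j + 2) (N := N) (by omega) (by omega)
  rw [if_neg hRN] at htail
  rw [nuI_eq_sum_Ico hj fun k hk => dB_eq_zero_of_forall_ge hN hk, nuI_eq_sum_Ico hj hN]
  linear_combination j * hj0 + (j + 1) * hj1 + 2 * htail

lemma IsFreq.nuI_dB_add_one (hf : IsFreq f) {j : ℕ} (hj : 1 ≤ j)
    (h : j + 1 ∈ Rset f ∨ j ∈ Rset f ∧ (j + 2 ∈ Rset f ∨ j = 1)) :
    nuI (dB f) j + 1 = nuI f j := by
  have hν := hf.nuI_dB_add hj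
  rcases h with h1 | ⟨h0, h2 | rfl⟩
  · have h0 : j ∉ Rset f := fun h0 => succ_notMem_Rset h0 h1
    have h2 : j + 2 ∉ Rset f := succ_notMem_Rset h1
    simp only [h0, h1, h2, if_true, if_false, mul_one, mul_zero] at hν
    omega
  · have h1 : j + 1 ∉ Rset f := succ_notMem_Rset h0
    simp only [h0, h1, h2, if_true, if_false, mul_one, mul_zero] at hν
    omega
  · have h1 : 2 ∉ Rset f := succ_notMem_Rset h0
    by_cases h2 : 3 ∈ Rset f <;> simp only [h0, h1, h2, if_true, if_false] at hν <;> omega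

lemma IsFreq.nuI_dB_lt_nuI (hf : IsFreq f) {j : ℕ} (hj : 1 ≤ j)
    (h : j ∈ Rset f ∨ j + 1 ∈ Rset f) : nuI (dB f) j < nuI f j := by
  rcases h with h0 | h1
  · have hν := hf.nuI_dB_add hj
    have h1 : j + 1 ∉ Rset f := succ_notMem_Rset h0
    by_cases h2 : j + 2 ∈ Rset f <;>
      simp only [h0, h1, h2, if_true, if_false, mul_one, mul_zero] at hν <;> omega
  · have := hf.nuI_dB_add_one hj (Or.inl h1)
    omega

lemma IsFreq.nuI_dB_lt_nuI_succ (hf : IsFreq f) {j : ℕ} (hj : 1 ≤ j) (h0 : j ∉ Rset f)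
    (h1 : j + 1 ∉ Rset f) (h2 : j + 2 ∈ Rset f) : nuI (dB f) j < nuI f (j + 1) := by
  have hν := hf.nuI_dB_add hj
  simp only [h0, h1, h2, if_true, if_false, mul_one, mul_zero] at hν
  have hfj : f j = 0 := by_contra fun h => (hf.mem_Rset_or_succ_mem h).elim h0 h1
  have hsucc := hf.nuI_succ_add hj
  have := Nat.mul_le_mul_left j (Nat.one_le_iff_ne_zero.2 (ne_zero_of_mem_Rset h2))
  rw [hfj] at hsucc
  omega

lemma IsFreq.nuI_dB_lt_of_maxIdx (hf : IsFreq f) {i : ℕ} (hmax : MaxIdx f i) (j : ℕ) :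
    nuI (dB f) j < nuI f i := by
  rw [← nuI_max_one]
  have hj : 1 ≤ max j 1 := le_max_right j 1
  generalize max j 1 = q at hj ⊢
  by_cases hR : q ∈ Rset f ∨ q + 1 ∈ Rset f
  · exact (hf.nuI_dB_lt_nuI hj hR).trans_le (hmax.2 q)
  obtain ⟨h0, h1⟩ := not_or.1 hR
  by_cases h2 : q + 2 ∈ Rset f
  · exact (hf.nuI_dB_lt_nuI_succ hj h0 h1 h2).trans_le (hmax.2 (q + 1))
  have hν := hf.nuI_dB_add hj
  simp only [h0, h1, h2, if_false, mul_zero, add_zero] at hν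
  have hfq : f q = 0 := by_contra fun h => (hf.mem_Rset_or_succ_mem h).elim h0 h1
  have hfq1 : f (q + 1) = 0 := by_contra fun h => (hf.mem_Rset_or_succ_mem h).elim h1 h2
  rw [hν]
  rcases eq_or_ne (nuI f q) 0 with hz | hz
  · exact hz ▸ Nat.pos_of_ne_zero hmax.1
  obtain ⟨b, hb⟩ := hf.exists_nuI_lt hj hfq hfq1 hz
  exact hb.trans_le (hmax.2 b)

lemma IsFreq.nuI_dB_add_one_of_leftAdm (hf : IsFreq f) {i : ℕ} (hL : LeftAdm f i) :
    nuI (dB f) i + 1 = nuI f i := by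
  rcases Nat.eq_zero_or_pos i with rfl | hi
  · have hf2 : f 2 = 0 := hL.2.resolve_left (by rw [hf.1]; omega) |>.2
    have h1 : 1 ∈ Rset f := hf.mem_Rset_of_succ_eq_zero hL.1.ne' hf2
    rw [← nuI_max_one, ← nuI_max_one (f := f)]
    exact hf.nuI_dB_add_one le_rfl (Or.inr ⟨h1, Or.inr rfl⟩)
  apply hf.nuI_dB_add_one hi
  have hi1 : f (i + 1) ≠ 0 := hL.1.ne'
  rcases hL.2 with hfi | ⟨-, hfi2⟩
  · rcases hf.mem_Rset_or_succ_mem hfi.ne' with h0 | h1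
    · exact Or.inr ⟨h0, Or.inl (add_two_mem_Rset h0 hi1)⟩
    · exact Or.inl h1
  · exact Or.inl (hf.mem_Rset_of_succ_eq_zero hi1 hfi2)

end Demotion

/-- if `i` is left admissible and maximal for `f` and `f ≠ (1)`,
then `i` is maximal for `∂f` and `ν_i(∂f) = ν_i(f) - 1`. -/
theorem stmt19 (f : ℕ → ℕ) (hf : IsFreq f) (i : ℕ)
    (hL : LeftAdm f i) (hmax : MaxIdx f i) (hne : f ≠ oneF) :
    MaxIdx (dB f) i ∧ nuI (dB f) i = nuI f i - 1 := by
  have hstep := hf.nuI_dB_add_one_of_leftAdm hL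
  have htwo := hf.two_le_nuI hL hne
  refine ⟨⟨by omega, fun j => ?_⟩, by omega⟩
  have := hf.nuI_dB_lt_of_maxIdx hmax j
  omega
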